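/- Let w ∈ S_n and let (j k) be a transposition with ℓ(w(j k)) = ℓ(w) + 1, where w(j k) denotes the product of w with (j k) on the right. Then p_{w(j k)}(w(j k)) = (t_{w(j)} − t_{w(k)}) · p_w(w(j k)); equivalently, the ratio p_w(w(j k))/p_{w(j k)}(w(j k)) equals 1/(t_{w(j)} − t_{w(k)}). -/

import Mathlib

open MvPolynomial Equiv Finset

noncomputable section

/-- The polynomial ring ℂ[t₁,…,tₙ]. -/
abbrev Pol (n : ℕ) : Type := MvPolynomial (Fin n) ℂ

/-- The action of a permutation `w` on polynomials by the substitution `tᵢ ↦ t_{w(i)}`. -/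
def pact {n : ℕ} (w : Perm (Fin n)) (f : Pol n) : Pol n := rename ⇑w f

/-- The GKM condition defining `R ⊆ ∏_{v ∈ Sₙ} ℂ[t₁,…,tₙ]`: for every `v` and every
transposition `(i j)` with `i < j`, the difference `p(v) − p((i j)v)` is divisible by
`tᵢ − tⱼ`. -/
def GKM (n : ℕ) (p : Perm (Fin n) → Pol n) : Prop :=
  ∀ (v : Perm (Fin n)) (i j : Fin n), i < j →
    (X i - X j : Pol n) ∣ (p v - p (Equiv.swap i j * v))

/-- The length of a permutation: its number of inversions. -/
def len {n : ℕ} (w : Perm (Fin n)) : ℕ :=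
  (Finset.univ.filter fun q : Fin n × Fin n => q.1 < q.2 ∧ w q.2 < w q.1).card

/-- Bruhat order: the partial order generated by `u < (i j) u` whenever `ℓ(u) < ℓ((i j)u)`. -/
def bruhatLE {n : ℕ} : Perm (Fin n) → Perm (Fin n) → Prop :=
  Relation.ReflTransGen
    (fun u v => (∃ i j : Fin n, i < j ∧ v = Equiv.swap i j * u) ∧ len u < len v)

/-- `p` is the canonical class (equivariant Schubert class) of `w`:
(i) each component is homogeneous of degree `ℓ(w)`; (ii) `p(v) = 0` unless `v ≥ w` in
Bruhat order; (iii) `p(w) = ∏ (tᵢ − tⱼ)` over pairs `i < j` with `ℓ((i j)w) < ℓ(w)`;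
and `p` satisfies the GKM conditions. -/
def IsCanonical {n : ℕ} (w : Perm (Fin n)) (p : Perm (Fin n) → Pol n) : Prop :=
  GKM n p ∧
  (∀ v, (p v).IsHomogeneous (len w)) ∧
  (∀ v, ¬ bruhatLE w v → p v = 0) ∧
  p w = ∏ q ∈ Finset.univ.filter
      (fun q : Fin n × Fin n => q.1 < q.2 ∧ len (Equiv.swap q.1 q.2 * w) < len w),
      (X q.1 - X q.2 : Pol n)

/-- The simple transposition `sᵢ = (i, i+1)`. -/
def sT (n i : ℕ) (h : i + 1 < n) : Perm (Fin n) :=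
  Equiv.swap ⟨i, Nat.lt_of_succ_lt h⟩ ⟨i + 1, h⟩

/-- The dot (left) action: `(w·p)(v) = w(p(w⁻¹ v))`. -/
def dot {n : ℕ} (w : Perm (Fin n)) (p : Perm (Fin n) → Pol n) : Perm (Fin n) → Pol n :=
  fun v => pact w (p (w⁻¹ * v))

/-- The star (right) action: `(p * w)(v) = p(vw)`. -/
def starAct {n : ℕ} (p : Perm (Fin n) → Pol n) (w : Perm (Fin n)) :
    Perm (Fin n) → Pol n :=
  fun v => p (v * w)

/-- `R` as a `ℂ[t₁,…,tₙ]`-submodule of the product. -/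
def gkmSubmodule (n : ℕ) : Submodule (Pol n) (Perm (Fin n) → Pol n) where
  carrier := {p | GKM n p}
  add_mem' := by
    intro a b ha hb v i j hij
    have h := dvd_add (ha v i j hij) (hb v i j hij)
    simpa [Pi.add_apply, add_sub_add_comm] using h
  zero_mem' := by
    intro v i j hij
    simp
  smul_mem' := by
    intro c p hp v i j hij
    have h := (hp v i j hij).mul_left c
    simpa [Pi.smul_apply, smul_eq_mul, mul_sub] using h

/-- The maximal ideal `𝔪 = (t₁,…,tₙ) ⊆ ℂ[t₁,…,tₙ]`. -/
def mIdeal (n : ℕ) : Ideal (Pol n) := Ideal.span (Set.range (X : Fin n → Pol n))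

/-- The submodule `𝔪R`: finite sums of products `c • p` with `c ∈ 𝔪` and `p ∈ R`. -/
def mR (n : ℕ) : Submodule (Pol n) (Perm (Fin n) → Pol n) :=
  Submodule.span (Pol n) {q | ∃ c ∈ mIdeal n, ∃ p, GKM n p ∧ q = c • p}


/-!
Write `w' = w (j k)`, so that `w = (w(j) w(k)) w'`. By (iii), `p_{w'}(w')` is the product of
`t_a − t_b` over the inversions `(a, b)` of `w'⁻¹`, one of which is `(w(j), w(k))`; let `P` be the
product over the others. For each of those, `(a b) w'` is shorter than `w'` and differs from `w`,
so `p_w` vanishes there and the GKM condition makes `t_a − t_b` divide `p_w(w')`. These linear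
forms are pairwise non-associated primes, so `P ∣ p_w(w')`, and as both have degree `ℓ(w)`,
`p_w(w') = c P` with `c` constant.

To see `c = 1`, substitute `t_{w(k)} ↦ t_{w(j)}`. The GKM condition on the edge `w' — w` makes
`p_w(w')` and `p_w(w)` agree after the substitution. So do `p_w(w)` and `P`: the usual injection of
the inversions of `w⁻¹` into those of `w'⁻¹ = w⁻¹ (w(j) w(k))` other than `(w(j), w(k))` only moves
entries by that transposition, and it is onto because `ℓ(w') = ℓ(w) + 1`.
-/

section Inversions

variable {α : Type*} [LinearOrder α]

def inversions [Fintype α] (v : Perm α) : Finset (α × α) :=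
  univ.filter fun x => x.1 < x.2 ∧ v x.2 < v x.1

@[simp]
lemma mem_inversions [Fintype α] {v : Perm α} {x : α × α} :
    x ∈ inversions v ↔ x.1 < x.2 ∧ v x.2 < v x.1 := by
  simp [inversions]

lemma inversions_inv [Fintype α] (v : Perm α) :
    inversions v⁻¹ = (inversions v).image fun x => (v x.2, v x.1) := by
  ext ⟨p, q⟩
  simp only [mem_inversions, mem_image, Prod.mk.injEq, Prod.exists]
  constructor
  · rintro ⟨hpq, h⟩
    exact ⟨v⁻¹ q, v⁻¹ p, ⟨h, by simpa using hpq⟩, by simp, by simp⟩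
  · rintro ⟨p', q', ⟨h1, h2⟩, rfl, rfl⟩
    simpa using ⟨h2, h1⟩

lemma card_inversions_inv [Fintype α] (v : Perm α) :
    #(inversions v⁻¹) = #(inversions v) := by
  rw [inversions_inv, card_image_of_injective]
  intro x y h
  simp only [Prod.mk.injEq, EmbeddingLike.apply_eq_iff_eq] at h
  exact Prod.ext h.2 h.1

lemma eq_of_swap_eq_swap {a b c d : α} (hab : a < b) (hcd : c < d)
    (h : swap a b = swap c d) : (a, b) = (c, d) := by
  have ha := DFunLike.congr_fun h a
  have hb := DFunLike.congr_fun h b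
  simp only [swap_apply_left, swap_apply_right, swap_apply_def] at ha hb
  split_ifs at ha hb <;> grind

/-- For `v a < v b`, injects the inversions of `v` into those of `v * swap a b`. -/
def swapPairing (a b : α) (x : α × α) : α × α :=
  if x = (a, b) ∨ (a < x.1 ∧ x.1 < b) ∨ (a < x.2 ∧ x.2 < b) then x
  else (swap a b x.1, swap a b x.2)

variable {a b : α}

lemma swapPairing_swapPairing (hab : a < b) {x : α × α} (hx : x.1 < x.2) :
    swapPairing a b (swapPairing a b x) = x := by
  obtain ⟨p, q⟩ := x
  simp only [swapPairing, swap_apply_def, Prod.mk.injEq] at hx ⊢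
  split_ifs <;> grind

lemma swapPairing_mem_inversions_mul_swap [Fintype α] {v : Perm α} (hab : a < b)
    (hv : v a < v b) {x : α × α} (hx : x ∈ inversions v) :
    swapPairing a b x ∈ inversions (v * swap a b) := by
  obtain ⟨p, q⟩ := x
  simp only [mem_inversions, swapPairing, Perm.mul_apply, swap_apply_def,
    Prod.mk.injEq] at hx ⊢
  split_ifs <;> grind

lemma swapPairing_ne [Fintype α] {v : Perm α} (hab : a < b) (hv : v a < v b)
    {x : α × α} (hx : x ∈ inversions v) : swapPairing a b x ≠ (a, b) := by
  intro h
  have := swapPairing_swapPairing hab (mem_inversions.1 hx).1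
  rw [h, swapPairing, if_pos (Or.inl rfl)] at this
  subst this
  exact (mem_inversions.1 hx).2.not_gt hv

lemma image_swapPairing_subset [Fintype α] {v : Perm α} (hab : a < b) (hv : v a < v b) :
    (inversions v).image (swapPairing a b) ⊆ (inversions (v * swap a b)).erase (a, b) := by
  simp only [subset_iff, mem_image, mem_erase]
  rintro _ ⟨x, hx, rfl⟩
  exact ⟨swapPairing_ne hab hv hx, swapPairing_mem_inversions_mul_swap hab hv hx⟩

lemma injOn_swapPairing [Fintype α] (v : Perm α) (hab : a < b) :
    Set.InjOn (swapPairing a b) (inversions v) := fun x hx y hy h => by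
  rw [← swapPairing_swapPairing hab (mem_inversions.1 hx).1,
    ← swapPairing_swapPairing hab (mem_inversions.1 hy).1, h]

lemma card_image_swapPairing [Fintype α] (v : Perm α) (hab : a < b) :
    #((inversions v).image (swapPairing a b)) = #(inversions v) :=
  card_image_of_injOn (injOn_swapPairing v hab)

lemma card_inversions_lt_mul_swap [Fintype α] {v : Perm α} (hab : a < b) (hv : v a < v b) :
    #(inversions v) < #(inversions (v * swap a b)) := by
  have := card_le_card (image_swapPairing_subset hab hv)
  rw [card_image_swapPairing v hab, card_erase_of_mem (by simpa using ⟨hab, hv⟩)] at this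
  have : 0 < #(inversions (v * swap a b)) := card_pos.2 ⟨(a, b), by simpa using ⟨hab, hv⟩⟩
  omega

lemma prod_erase_inversions_mul_swap [Fintype α] {M : Type*} [CommMonoid M] {v : Perm α}
    (hab : a < b) (hv : v a < v b)
    (hlen : #(inversions (v * swap a b)) = #(inversions v) + 1)
    (f : α × α → M) (hf : ∀ x : α × α, f (swap a b x.1, swap a b x.2) = f x) :
    ∏ x ∈ (inversions (v * swap a b)).erase (a, b), f x = ∏ x ∈ inversions v, f x := by
  have himage : (inversions v).image (swapPairing a b) =
      (inversions (v * swap a b)).erase (a, b) := by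
    refine eq_of_subset_of_card_le (image_swapPairing_subset hab hv) ?_
    rw [card_image_swapPairing v hab, card_erase_of_mem (by simpa using ⟨hab, hv⟩), hlen]
    rfl
  rw [← himage, prod_image (injOn_swapPairing v hab)]
  refine prod_congr rfl fun x _ => ?_
  unfold swapPairing
  split_ifs
  · rfl
  · exact hf x

end Inversions

section Length

variable {n : ℕ}

lemma len_eq_card_inversions (v : Perm (Fin n)) : len v = #(inversions v) := rfl

lemma len_inv (v : Perm (Fin n)) : len v⁻¹ = len v := card_inversions_inv v

lemma len_lt_len_mul_swap {v : Perm (Fin n)} {a b : Fin n} (hab : a < b) (hv : v a < v b) :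
    len v < len (v * swap a b) :=
  card_inversions_lt_mul_swap hab hv

lemma len_swap_mul_lt_iff {a b : Fin n} (hab : a < b) (u : Perm (Fin n)) :
    len (swap a b * u) < len u ↔ u⁻¹ b < u⁻¹ a := by
  have hlen : len (swap a b * u) = len (u⁻¹ * swap a b) := by
    rw [← len_inv, mul_inv_rev, swap_inv]
  rw [hlen, ← len_inv u]
  constructor
  · intro h
    refine lt_of_not_ge fun h' => h.not_gt (len_lt_len_mul_swap hab (lt_of_le_of_ne h' ?_))
    exact fun h'' => hab.ne (u⁻¹.injective h'')
  · intro h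
    have := len_lt_len_mul_swap (v := u⁻¹ * swap a b) hab (by simpa using h)
    rwa [mul_swap_mul_self] at this

lemma filter_len_swap_mul_lt_eq_inversions_inv (u : Perm (Fin n)) :
    univ.filter (fun q : Fin n × Fin n => q.1 < q.2 ∧ len (swap q.1 q.2 * u) < len u) =
      inversions u⁻¹ := by
  ext x
  simp only [mem_filter, mem_univ, true_and, mem_inversions]
  exact and_congr_right fun h => len_swap_mul_lt_iff h u

lemma eq_or_len_lt_of_bruhatLE {u v : Perm (Fin n)} (h : bruhatLE u v) : u = v ∨ len u < len v := by
  induction h with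
  | refl => exact Or.inl rfl
  | tail _ step ih => exact Or.inr (ih.elim (· ▸ step.2) (·.trans step.2))

end Length

namespace MvPolynomial

variable {σ R : Type*} [CommRing R]

lemma eq_C_of_isHomogeneous_mul [IsDomain R] {m : ℕ} {f g : MvPolynomial σ R}
    (hf : f.IsHomogeneous m) (hf0 : f ≠ 0) (hfg : (f * g).IsHomogeneous m) :
    g = C (coeff 0 g) := by
  obtain rfl | hg0 := eq_or_ne g 0
  · simp
  have hdeg := totalDegree_mul_of_isDomain hf0 hg0
  rw [hfg.totalDegree (mul_ne_zero hf0 hg0), hf.totalDegree hf0] at hdeg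
  exact totalDegree_eq_zero_iff_eq_C.1 (by omega)

def rootProd (s : Finset (σ × σ)) : MvPolynomial σ R := ∏ x ∈ s, (X x.1 - X x.2)

lemma isHomogeneous_rootProd (s : Finset (σ × σ)) :
    (rootProd s : MvPolynomial σ R).IsHomogeneous #s := by
  simpa [rootProd] using IsHomogeneous.prod s (fun x => (X x.1 - X x.2 : MvPolynomial σ R))
    (fun _ => 1) fun x _ => (isHomogeneous_X R x.1).sub (isHomogeneous_X R x.2)

variable [DecidableEq σ]

def collapse (a b : σ) : σ → σ := Function.update id b a

@[simp]
lemma collapse_self (a b : σ) : collapse a b b = a := Function.update_self ..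

lemma collapse_of_ne {a b x : σ} (h : x ≠ b) : collapse a b x = x := Function.update_of_ne h ..

lemma collapse_swap (a b x : σ) : collapse a b (swap a b x) = collapse a b x := by
  simp only [collapse, swap_apply_def, Function.update_apply, id]
  split_ifs <;> simp_all

lemma rename_collapse_X_sub_X_eq_zero {a b : σ} (hab : a ≠ b) :
    rename (collapse a b) (X a - X b : MvPolynomial σ R) = 0 := by
  simp [collapse_of_ne hab]

lemma X_sub_X_dvd_sub_rename_collapse (a b : σ) (f : MvPolynomial σ R) :
    X a - X b ∣ f - rename (collapse a b) f := by
  set I := Ideal.span {(X a - X b : MvPolynomial σ R)}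
  have hmk : (Ideal.Quotient.mkₐ R I).comp (rename (collapse a b)) = Ideal.Quotient.mkₐ R I := by
    refine algHom_ext fun i => ?_
    obtain rfl | hi := eq_or_ne i b
    · simp only [AlgHom.comp_apply, rename_X, collapse_self, Ideal.Quotient.mkₐ_eq_mk]
      exact Ideal.Quotient.eq.2 (Ideal.subset_span rfl)
    · simp [collapse_of_ne hi]
  rw [← Ideal.mem_span_singleton, ← Ideal.Quotient.eq]
  exact (DFunLike.congr_fun hmk f).symm

lemma X_sub_X_dvd_iff {a b : σ} (hab : a ≠ b) {f : MvPolynomial σ R} :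
    X a - X b ∣ f ↔ rename (collapse a b) f = 0 := by
  constructor
  · rintro ⟨g, rfl⟩
    rw [map_mul, rename_collapse_X_sub_X_eq_zero hab, zero_mul]
  · intro h
    simpa [h] using X_sub_X_dvd_sub_rename_collapse a b f

lemma prime_X_sub_X [IsDomain R] {a b : σ} (hab : a ≠ b) :
    Prime (X a - X b : MvPolynomial σ R) := by
  have hker : Ideal.span {(X a - X b : MvPolynomial σ R)} =
      RingHom.ker (rename (collapse a b)) := by
    ext f
    rw [Ideal.mem_span_singleton, RingHom.mem_ker, X_sub_X_dvd_iff hab]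
  refine (Ideal.span_singleton_prime ?_).1 (hker ▸ RingHom.ker_isPrime _)
  exact sub_ne_zero.2 fun h => hab (X_injective h)

section Preorder

variable [Preorder σ] {a b c d : σ}

lemma rename_collapse_X_sub_X_ne_zero [Nontrivial R] (hab : a < b) (hcd : c < d)
    (hne : (c, d) ≠ (a, b)) : rename (collapse a b) (X c - X d : MvPolynomial σ R) ≠ 0 := by
  rw [map_sub, rename_X, rename_X, sub_ne_zero, Ne, X_inj]
  intro h
  by_cases hc : c = b <;> by_cases hd : d = b
  · exact hcd.ne (hc.trans hd.symm)
  · rw [hc, collapse_self, collapse_of_ne hd] at h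
    exact lt_asymm hab (h ▸ hc ▸ hcd)
  · rw [hd, collapse_self, collapse_of_ne hc] at h
    exact hne (by rw [h, hd])
  · rw [collapse_of_ne hc, collapse_of_ne hd] at h
    exact hcd.ne h

lemma rename_collapse_rootProd_ne_zero [IsDomain R] (hab : a < b) {s : Finset (σ × σ)}
    (hs : ∀ x ∈ s, x.1 < x.2 ∧ x ≠ (a, b)) :
    rename (collapse a b) (rootProd s : MvPolynomial σ R) ≠ 0 := by
  rw [rootProd, map_prod, prod_ne_zero_iff]
  exact fun x hx => rename_collapse_X_sub_X_ne_zero hab (hs x hx).1 (hs x hx).2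

lemma rootProd_dvd [IsDomain R] [UniqueFactorizationMonoid R] {s : Finset (σ × σ)}
    (hs : ∀ x ∈ s, x.1 < x.2) {f : MvPolynomial σ R} (hf : ∀ x ∈ s, X x.1 - X x.2 ∣ f) :
    rootProd s ∣ f := by
  refine prod_dvd_of_isRelPrime (fun x hx y hy hxy => ?_) hf
  refine (prime_X_sub_X (hs x hx).ne).irreducible.isRelPrime_iff_not_dvd.2 fun hdvd => ?_
  exact rename_collapse_X_sub_X_ne_zero (hs x hx) (hs y hy) (fun h => hxy h.symm)
    ((X_sub_X_dvd_iff (hs x hx).ne).1 hdvd)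

end Preorder

end MvPolynomial

lemma rename_collapse_rootProd_inversions_mul_swap_erase {α R : Type*} [LinearOrder α]
    [Fintype α] [CommRing R] {v : Perm α} {a b : α} (hab : a < b) (hv : v a < v b)
    (hlen : #(inversions (v * swap a b)) = #(inversions v) + 1) :
    rename (collapse a b) (rootProd ((inversions (v * swap a b)).erase (a, b)) : MvPolynomial α R) =
      rename (collapse a b) (rootProd (inversions v)) := by
  simp only [rootProd, map_prod]
  exact prod_erase_inversions_mul_swap hab hv hlen _ fun x => by
    simp only [map_sub, rename_X, collapse_swap]

lemma inv_mul_swap {α : Type*} [DecidableEq α] (w : Perm α) (j k : α) :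
    (w * swap j k)⁻¹ = w⁻¹ * swap (w j) (w k) := by
  rw [mul_inv_rev, swap_inv, swap_mul_eq_mul_swap, inv_inv]

lemma swap_apply_apply_mul_mul_swap {α : Type*} [DecidableEq α] (w : Perm α) (j k : α) :
    swap (w j) (w k) * (w * swap j k) = w := by
  rw [mul_swap_eq_swap_mul, swap_mul_self_mul]

section MulSwap

variable {n : ℕ} {w : Perm (Fin n)} {j k : Fin n}

lemma apply_lt_apply_of_len_lt_len_mul_swap (hjk : j < k) (hlen : len w < len (w * swap j k)) :
    w j < w k := by
  refine lt_of_not_ge fun h => ?_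
  have := len_lt_len_mul_swap (v := w * swap j k) hjk
    (by simpa using lt_of_le_of_ne h (w.injective.ne hjk.ne'))
  rw [mul_swap_mul_self] at this
  omega

lemma mem_inversions_inv_mul_swap (hjk : j < k) (hlen : len w < len (w * swap j k)) :
    (w j, w k) ∈ inversions (w * swap j k)⁻¹ := by
  simpa [inv_mul_swap] using ⟨apply_lt_apply_of_len_lt_len_mul_swap hjk hlen, hjk⟩

end MulSwap

namespace IsCanonical

variable {n : ℕ} {w : Perm (Fin n)} {p : Perm (Fin n) → Pol n} {j k : Fin n}

lemma apply_self (h : IsCanonical w p) : p w = rootProd (inversions w⁻¹) := by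
  rw [h.2.2.2, filter_len_swap_mul_lt_eq_inversions_inv, rootProd]

lemma apply_eq_zero (h : IsCanonical w p) {v : Perm (Fin n)} (hv : len v ≤ len w) (hne : v ≠ w) :
    p v = 0 :=
  h.2.2.1 v fun hb => (eq_or_len_lt_of_bruhatLE hb).elim (hne ·.symm) hv.not_gt

lemma rootProd_dvd_apply_mul_swap (h : IsCanonical w p) (hjk : j < k)
    (hlen : len (w * swap j k) = len w + 1) :
    rootProd ((inversions (w * swap j k)⁻¹).erase (w j, w k)) ∣ p (w * swap j k) := by
  have hwjk := apply_lt_apply_of_len_lt_len_mul_swap hjk (hlen ▸ lt_add_one (len w))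
  refine rootProd_dvd (fun x hx => (mem_inversions.1 (mem_of_mem_erase hx)).1) fun x hx => ?_
  obtain ⟨hx_ne, hx⟩ := mem_erase.1 hx
  obtain ⟨hx12, hx_inv⟩ := mem_inversions.1 hx
  have hshorter : len (swap x.1 x.2 * (w * swap j k)) < len (w * swap j k) :=
    (len_swap_mul_lt_iff hx12 _).2 (by simpa using hx_inv)
  have hne : swap x.1 x.2 * (w * swap j k) ≠ w := fun heq =>
    hx_ne <| eq_of_swap_eq_swap hx12 hwjk <|
      mul_right_cancel (heq.trans (swap_apply_apply_mul_mul_swap w j k).symm)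
  simpa [h.apply_eq_zero (by omega) hne] using h.1 (w * swap j k) x.1 x.2 hx12

lemma rename_collapse_apply_mul_swap (h : IsCanonical w p) (hjk : j < k)
    (hlen : len (w * swap j k) = len w + 1) :
    rename (collapse (w j) (w k)) (p (w * swap j k)) =
      rename (collapse (w j) (w k))
        (rootProd ((inversions (w * swap j k)⁻¹).erase (w j, w k))) := by
  have hwjk := apply_lt_apply_of_len_lt_len_mul_swap hjk (hlen ▸ lt_add_one (len w))
  have hedge := h.1 (w * swap j k) (w j) (w k) hwjk
  rw [swap_apply_apply_mul_mul_swap, X_sub_X_dvd_iff hwjk.ne, map_sub, sub_eq_zero] at hedge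
  rw [hedge, h.apply_self, inv_mul_swap]
  refine (rename_collapse_rootProd_inversions_mul_swap_erase hwjk (by simpa) ?_).symm
  rw [← inv_mul_swap]
  exact (len_inv _).trans (hlen.trans (congrArg (· + 1) (len_inv w).symm))

lemma apply_mul_swap (h : IsCanonical w p) (hjk : j < k)
    (hlen : len (w * swap j k) = len w + 1) :
    p (w * swap j k) = rootProd ((inversions (w * swap j k)⁻¹).erase (w j, w k)) := by
  set P : Pol n := rootProd ((inversions (w * swap j k)⁻¹).erase (w j, w k))
  have hlt : len w < len (w * swap j k) := hlen ▸ lt_add_one (len w)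
  have hwjk := apply_lt_apply_of_len_lt_len_mul_swap hjk hlt
  have hφP : rename (collapse (w j) (w k)) P ≠ 0 := by
    refine rename_collapse_rootProd_ne_zero hwjk fun x hx => ?_
    exact ⟨(mem_inversions.1 (mem_of_mem_erase hx)).1, ne_of_mem_erase hx⟩
  have hcard : #((inversions (w * swap j k)⁻¹).erase (w j, w k)) = len w := by
    rw [card_erase_of_mem (mem_inversions_inv_mul_swap hjk hlt),
      ← len_eq_card_inversions, len_inv, hlen, Nat.add_sub_cancel]
  have hPdeg : P.IsHomogeneous (len w) := hcard ▸ isHomogeneous_rootProd _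
  obtain ⟨g, hg⟩ := h.rootProd_dvd_apply_mul_swap hjk hlen
  have hgC : g = C (coeff 0 g) :=
    eq_C_of_isHomogeneous_mul hPdeg (ne_zero_of_map hφP) (hg ▸ h.2.1 _)
  have hφ := h.rename_collapse_apply_mul_swap hjk hlen
  rw [hg, hgC, map_mul, rename_C] at hφ
  have hg1 : C (coeff 0 g) = (1 : Pol n) := by
    simpa using mul_left_cancel₀ hφP (hφ.trans (mul_one _).symm)
  rw [hg, hgC, hg1, mul_one]

end IsCanonical

theorem localization_ratio_general (n : ℕ)
    (pw : Perm (Fin n) → Perm (Fin n) → Pol n)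
    (hpw : ∀ w, IsCanonical w (pw w))
    (w : Perm (Fin n)) (j k : Fin n) (hjk : j < k)
    (hlen : len (w * Equiv.swap j k) = len w + 1) :
    pw (w * Equiv.swap j k) (w * Equiv.swap j k)
      = (X (w j) - X (w k) : Pol n) * pw w (w * Equiv.swap j k) := by
  rw [(hpw _).apply_self, (hpw w).apply_mul_swap hjk hlen, rootProd, rootProd,
    mul_prod_erase _ (fun x => (X x.1 - X x.2 : Pol n))
      (mem_inversions_inv_mul_swap hjk (hlen ▸ lt_add_one (len w)))]

/-- if `ℓ(w(jk)) = ℓ(w) + 1` then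
`p_{w(jk)}(w(jk)) = (t_{w(j)} − t_{w(k)}) · p_w(w(jk))`, i.e. the ratio
`p_w(w(jk)) / p_{w(jk)}(w(jk))` equals `1/(t_{w(j)} − t_{w(k)})`. -/
theorem localization_ratio (n : ℕ) (hn : 1 ≤ n)
    (pw : Perm (Fin n) → Perm (Fin n) → Pol n)
    (hpw : ∀ w, IsCanonical w (pw w))
    (w : Perm (Fin n)) (j k : Fin n) (hjk : j < k)
    (hlen : len (w * Equiv.swap j k) = len w + 1) :
    pw (w * Equiv.swap j k) (w * Equiv.swap j k)
      = (X (w j) - X (w k) : Pol n) * pw w (w * Equiv.swap j k) :=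
  localization_ratio_general n pw hpw w j k hjk hlen
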